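/- arXiv:1504.05172 — 2 statements merged into one kernel-verified Lean document; each statement's English description precedes it below -/
import Mathlib

section
/- There exists C ≥ 1 such that for every w ∈ F and every factorization w = u·v without cancellation (i.e., the reduced word of w is the concatenation of the reduced words of u and v), one has | |u|_Y + |v|_Y − |w|_Y | ≤ 2C. -/
/-!
The inequality `|u * v|_Y ≤ |u|_Y + |v|_Y` holds for any word length. For the converse up to `1`,
note that the `W`-words generate `F` (every letter is one) and that every nontrivial subword of a
`W`-word is again a `W`-word. Write `u * v = z₁ ⋯ zₖ` with `k = |u * v|_Y`. If the reduced word of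
`u` is a prefix of that of `z₁`, then `u` and `u⁻¹ * z₁` are subwords of `z₁`, and
`v = (u⁻¹ * z₁) * z₂ ⋯ zₖ`; otherwise `z₁⁻¹ * u` and `v` still multiply without cancellation to
`z₂ ⋯ zₖ`, and we recurse. Either way `|u|_Y + |v|_Y ≤ k + 1`, so `C = 1` works.
-/

open FreeGroup Filter

namespace PurelyLox

abbrev F : Type := FreeGroup (Fin 3)

def a : F := FreeGroup.of 0
def b : F := FreeGroup.of 1
def c : F := FreeGroup.of 2

/-- The subgroup generated by `a` and `b`. -/
def H : Subgroup F := Subgroup.closure {a, b}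

/-- `g` is a positive word in the generators `a` and `b`. -/
def PosAB (g : F) : Prop :=
  ∀ x ∈ g.toWord, x.2 = true ∧ x.1 ≠ 2

/-- A word is 7-aperiodic: it contains no subword `u^7` with `u` nonempty. -/
def Aperiodic7 {β : Type*} (w : List β) : Prop :=
  ¬ ∃ u : List β, u ≠ [] ∧ (List.flatten (List.replicate 7 u)) <:+: w

/-- The data of the fixed sequence `(v n)` of positive 7-aperiodic words in `a,b`,
with pairwise distinct lengths tending to infinity. -/
structure VSeq where
  v : ℕ → F
  pos : ∀ n, PosAB (v n)
  len_ne : ∀ m n, m ≠ n → ((v m).toWord.length ≠ (v n).toWord.length)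
  len_tendsto : Tendsto (fun n => (v n).toWord.length) atTop atTop
  aperiodic : ∀ n, Aperiodic7 (v n).toWord

/-- `w n = v n * c`. -/
def VSeq.w (V : VSeq) (n : ℕ) : F := V.v n * c

/-- `z` is a `W`-word: nontrivial, and its reduced word is a subword of
the reduced word of `(w n)^m` for some `n` and some `m ≠ 0`. -/
def VSeq.IsW (V : VSeq) (z : F) : Prop :=
  z ≠ 1 ∧ ∃ (n : ℕ) (m : ℤ), m ≠ 0 ∧ z.toWord <:+: ((V.w n) ^ m).toWord

/-- `|g|_Y`: the least `k` such that `g` is a product of `k` `W`-words. -/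
noncomputable def VSeq.normY (V : VSeq) (g : F) : ℕ :=
  sInf {k | ∃ l : List F, l.length = k ∧ (∀ z ∈ l, V.IsW z) ∧ l.prod = g}

/-- The vertex distance in the graph `Y`. -/
noncomputable def VSeq.dY (V : VSeq) (x y : F) : ℕ := V.normY (x⁻¹ * y)

/-- The product `u * v` is without cancellation. -/
def NoCancel (u v : F) : Prop := (u * v).toWord = u.toWord ++ v.toWord

/-- `p 0, p 1, …, p k` is a `d_Y`-geodesic from `x` to `y`. -/
def VSeq.IsGeodesic (V : VSeq) (x y : F) (k : ℕ) (p : ℕ → F) : Prop :=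
  p 0 = x ∧ p k = y ∧ (∀ i < k, V.dY (p i) (p (i + 1)) = 1) ∧ k = V.dY x y

/-- `g` is cyclically reduced. -/
def CyclicallyReduced (g : F) : Prop := (g * g).toWord = g.toWord ++ g.toWord

/-- `g` is root-free. -/
def RootFree (g : F) : Prop := ∀ (x : F) (s : ℤ), 2 ≤ |s| → g ≠ x ^ s

end PurelyLox

section WordLength

variable {M : Type*} [Monoid M] (S : Set M)

/-- `V.normY` is `wordLength {z | V.IsW z}` by definition. Outside `Submonoid.closure S` the
value is the junk `sInf ∅ = 0`. -/
noncomputable def wordLength (g : M) : ℕ :=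
  sInf {k | ∃ l : List M, l.length = k ∧ (∀ z ∈ l, z ∈ S) ∧ l.prod = g}

variable {S}

theorem wordLength_prod_le {l : List M} (hl : ∀ z ∈ l, z ∈ S) : wordLength S l.prod ≤ l.length :=
  Nat.sInf_le ⟨l, rfl, hl, rfl⟩

theorem wordLength_le_one {z : M} (hz : z ∈ S) : wordLength S z ≤ 1 := by
  simpa using wordLength_prod_le (l := [z]) (by simpa using hz)

variable (S) in
@[simp]
theorem wordLength_one : wordLength S 1 = 0 :=
  Nat.le_zero.mp (wordLength_prod_le (l := []) (by simp))

theorem exists_list_length_eq_wordLength {g : M} (hg : g ∈ Submonoid.closure S) :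
    ∃ l : List M, (∀ z ∈ l, z ∈ S) ∧ l.prod = g ∧ l.length = wordLength S g := by
  obtain ⟨l, hlS, rfl⟩ := Submonoid.exists_list_of_mem_closure hg
  have hmem : wordLength S l.prod ∈ _ := Nat.sInf_mem ⟨l.length, l, rfl, hlS, rfl⟩
  obtain ⟨l', hl', hl'S, hprod⟩ := hmem
  exact ⟨l', hl'S, hprod, hl'⟩

theorem wordLength_mul_le {x y : M} (hx : x ∈ Submonoid.closure S)
    (hy : y ∈ Submonoid.closure S) : wordLength S (x * y) ≤ wordLength S x + wordLength S y := by
  obtain ⟨lx, hlxS, rfl, hlx⟩ := exists_list_length_eq_wordLength hx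
  obtain ⟨ly, hlyS, rfl, hly⟩ := exists_list_length_eq_wordLength hy
  rw [← hlx, ← hly, ← List.length_append, ← List.prod_append]
  exact wordLength_prod_le (by simpa [or_imp, forall_and] using ⟨hlxS, hlyS⟩)

end WordLength

namespace FreeGroup

variable {α : Type*} [DecidableEq α]

theorem IsReduced.exists_reduce_append_eq {L₁ L₂ : List (α × Bool)} (h₁ : IsReduced L₁)
    (h₂ : IsReduced L₂) :
    ∃ P Q R, L₁ = P ++ Q ∧ L₂ = invRev Q ++ R ∧ reduce (L₁ ++ L₂) = P ++ R := by
  induction L₁ using List.reverseRecOn generalizing L₂ with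
  | nil => exact ⟨[], [], L₂, rfl, by simp, h₂.reduce_eq⟩
  | append_singleton M x ih =>
    obtain ⟨x₁, x₂⟩ := x
    cases L₂ with
    | nil => exact ⟨M ++ [(x₁, x₂)], [], [], by simp, by simp, by simpa using h₁.reduce_eq⟩
    | cons y L₂ =>
      by_cases hxy : y = (x₁, !x₂)
      · subst hxy
        obtain ⟨P, Q, R, rfl, rfl, hred⟩ := ih (h₁.infix (List.infix_append [] M [(x₁, x₂)]))
          (h₂.infix (List.suffix_cons _ _).isInfix)
        refine ⟨P, Q ++ [(x₁, x₂)], R, by simp, by simp [invRev], ?_⟩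
        rw [← hred, ← reduce.Step.eq (Red.Step.not (L₁ := P ++ Q) (x := x₁) (b := x₂))]
        simp
      · refine ⟨M ++ [(x₁, x₂)], [], y :: L₂, by simp, by simp, IsReduced.reduce_eq ?_⟩
        refine h₁.append_overlap (L₂ := [(x₁, x₂)]) ?_ (List.cons_ne_nil _ _)
        refine isReduced_cons_cons.mpr ⟨fun h => ?_, h₂⟩
        obtain ⟨y₁, y₂⟩ := y
        simp_all

theorem exists_toWord_mul_eq_append (x y : FreeGroup α) :
    ∃ P Q R, x.toWord = P ++ Q ∧ y.toWord = invRev Q ++ R ∧ (x * y).toWord = P ++ R := by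
  rw [toWord_mul]
  exact isReduced_toWord.exists_reduce_append_eq isReduced_toWord

theorem toWord_mk_of_infix {L : List (α × Bool)} {x : FreeGroup α} (h : L <:+: x.toWord) :
    (mk L).toWord = L := by
  rw [toWord_mk, (isReduced_toWord.infix h).reduce_eq]

theorem toWord_inv_mul_of_toWord_eq_append {x y : FreeGroup α} {L : List (α × Bool)}
    (h : x.toWord = y.toWord ++ L) : (y⁻¹ * x).toWord = L := by
  have hx : x = y * mk L := by rw [← mk_toWord (x := y), mul_mk, ← h, mk_toWord]
  rw [hx, inv_mul_cancel_left, toWord_mk_of_infix (x := x) ⟨y.toWord, [], by simp [h]⟩]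

theorem toWord_mul_inv_of_toWord_eq_append {x y : FreeGroup α} {L : List (α × Bool)}
    (h : x.toWord = L ++ y.toWord) : (x * y⁻¹).toWord = L := by
  have hx : x = mk L * y := by rw [← mk_toWord (x := y), mul_mk, ← h, mk_toWord]
  rw [hx, mul_inv_cancel_right, toWord_mk_of_infix (x := x) ⟨[], y.toWord, by simp [h]⟩]

theorem toWord_prefix_or_toWord_inv_mul_mul {z g u v : FreeGroup α} (hzg : z * g = u * v)
    (huv : (u * v).toWord = u.toWord ++ v.toWord) :
    u.toWord <+: z.toWord ∨ (z⁻¹ * u * v).toWord = (z⁻¹ * u).toWord ++ v.toWord := by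
  obtain ⟨P, Q, R, hz, hg, hzg'⟩ := exists_toWord_mul_eq_append z g
  rw [hzg, huv] at hzg'
  rcases List.append_eq_append_iff.mp hzg' with ⟨T, rfl, -⟩ | ⟨U, hu, hR⟩
  · exact .inl ⟨T ++ Q, by simp [hz]⟩
  · have hg' : (z⁻¹ * u * v).toWord = (invRev Q ++ U) ++ v.toWord := by
      rw [show z⁻¹ * u * v = g by rw [mul_assoc, ← hzg, inv_mul_cancel_left], hg, hR,
        List.append_assoc]
    exact .inr (by rw [hg', ← toWord_mul_inv_of_toWord_eq_append hg', mul_inv_cancel_right])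

def FactorClosed (S : Set (FreeGroup α)) : Prop :=
  ∀ ⦃z g : FreeGroup α⦄, z ∈ S → g ≠ 1 → g.toWord <:+: z.toWord → g ∈ S

variable {S : Set (FreeGroup α)}

theorem FactorClosed.wordLength_le_one_of_infix (hS : FactorClosed S) {z g : FreeGroup α}
    (hz : z ∈ S) (h : g.toWord <:+: z.toWord) : wordLength S g ≤ 1 := by
  rcases eq_or_ne g 1 with rfl | hg
  · simp
  · exact wordLength_le_one (hS hz hg h)

theorem FactorClosed.wordLength_add_le_length_add_one (hS : FactorClosed S)
    (hgen : Submonoid.closure S = ⊤) {l : List (FreeGroup α)} (hl : ∀ z ∈ l, z ∈ S)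
    {u v : FreeGroup α} (huv : (u * v).toWord = u.toWord ++ v.toWord) (hprod : l.prod = u * v) :
    wordLength S u + wordLength S v ≤ l.length + 1 := by
  induction l generalizing u v with
  | nil =>
    obtain ⟨hu, hv⟩ : u.toWord = [] ∧ v.toWord = [] := by
      rw [← List.append_eq_nil_iff, ← huv, ← hprod, List.prod_nil, toWord_one]
    simp [toWord_eq_nil_iff.mp hu, toWord_eq_nil_iff.mp hv]
  | cons z l ih =>
    have hclosure (g : FreeGroup α) : g ∈ Submonoid.closure S := hgen ▸ Submonoid.mem_top g
    have hz : z ∈ S := hl z List.mem_cons_self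
    have hlS : ∀ y ∈ l, y ∈ S := fun y hy => hl y (List.mem_cons_of_mem _ hy)
    rw [List.prod_cons] at hprod
    rcases toWord_prefix_or_toWord_inv_mul_mul hprod huv with ⟨T, hT⟩ | hnc
    · have hv : v = u⁻¹ * z * l.prod := by rw [mul_assoc, hprod, inv_mul_cancel_left]
      have hu : wordLength S u ≤ 1 := hS.wordLength_le_one_of_infix hz ⟨[], T, by simp [hT]⟩
      have hzu : wordLength S (u⁻¹ * z) ≤ 1 := hS.wordLength_le_one_of_infix hz
        ⟨u.toWord, [], by simp [toWord_inv_mul_of_toWord_eq_append hT.symm, hT]⟩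
      calc wordLength S u + wordLength S v
          ≤ 1 + (wordLength S (u⁻¹ * z) + wordLength S l.prod) := by
            grw [hu, hv, wordLength_mul_le (hclosure _) (hclosure _)]
        _ ≤ (z :: l).length + 1 := by
            grw [hzu, wordLength_prod_le hlS]
            simp only [List.length_cons]
            omega
    · have hu : u = z * (z⁻¹ * u) := (mul_inv_cancel_left z u).symm
      have := ih hlS hnc (by rw [mul_assoc, ← hprod, inv_mul_cancel_left])
      calc wordLength S u + wordLength S v
          ≤ wordLength S z + wordLength S (z⁻¹ * u) + wordLength S v := by
            grw [← wordLength_mul_le (hclosure _) (hclosure _), ← hu]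
        _ ≤ (z :: l).length + 1 := by
            grw [wordLength_le_one hz]
            simp only [List.length_cons]
            omega

theorem FactorClosed.wordLength_add_le (hS : FactorClosed S) (hgen : Submonoid.closure S = ⊤)
    {u v : FreeGroup α} (huv : (u * v).toWord = u.toWord ++ v.toWord) :
    wordLength S u + wordLength S v ≤ wordLength S (u * v) + 1 := by
  obtain ⟨l, hlS, hprod, hl⟩ := exists_list_length_eq_wordLength (hgen ▸ Submonoid.mem_top (u * v))
  exact hl ▸ hS.wordLength_add_le_length_add_one hgen hlS huv hprod

end FreeGroup

namespace PurelyLox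

theorem not_aperiodic7_replicate {β : Type*} {k : ℕ} (hk : 7 ≤ k) (x : β) :
    ¬ Aperiodic7 (List.replicate k x) := by
  refine fun h => h ⟨[x], List.cons_ne_nil _ _, ?_⟩
  obtain ⟨j, rfl⟩ := Nat.exists_eq_add_of_le hk
  rw [List.flatten_replicate_singleton, List.replicate_add]
  exact List.infix_append [] _ _

namespace VSeq

variable (V : VSeq)

theorem toWord_w (n : ℕ) : (V.w n).toWord = (V.v n).toWord ++ [(2, true)] := by
  rw [w, c, toWord_mul, toWord_of]
  refine IsReduced.reduce_eq (List.isChain_append.mpr ⟨isReduced_toWord, .singleton _, ?_⟩)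
  intro x hx y hy h
  simp only [List.head?_cons, Option.mem_def, Option.some.injEq] at hy
  exact absurd (h.trans (congrArg Prod.fst hy.symm)) (V.pos n x (List.mem_of_mem_getLast? hx)).2

theorem mem_toWord_v {n : ℕ} (hn : 7 ≤ (V.v n).toWord.length) {i : Fin 3} (hi : i ≠ 2) :
    (i, true) ∈ (V.v n).toWord := by
  by_contra hnot
  have hother : ∀ i : Fin 3, i ≠ 2 → ∃ j, ∀ k : Fin 3, k ≠ 2 → k ≠ i → k = j := by decide
  obtain ⟨j, hj⟩ := hother i hi
  have hall : ∀ x ∈ (V.v n).toWord, x = (j, true) := by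
    intro x hx
    obtain ⟨hx₂, hx₁⟩ := V.pos n x hx
    have hxi : x.1 ≠ i := fun h => hnot (by rwa [← h, ← hx₂])
    exact Prod.ext (hj _ hx₁ hxi) hx₂
  exact not_aperiodic7_replicate hn _ (List.eq_replicate_of_mem hall ▸ V.aperiodic n)

theorem exists_mem_toWord_w (i : Fin 3) : ∃ n, (i, true) ∈ (V.w n).toWord := by
  obtain ⟨n, hn⟩ := (V.len_tendsto.eventually_ge_atTop 7).exists
  refine ⟨n, ?_⟩
  rw [toWord_w]
  by_cases hi : i = 2
  · simp [hi]
  · exact List.mem_append_left _ (V.mem_toWord_v hn hi)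

variable {V} in
theorem IsW.inv {z : F} (hz : V.IsW z) : V.IsW z⁻¹ := by
  obtain ⟨hz1, n, m, hm, h⟩ := hz
  refine ⟨inv_ne_one.mpr hz1, n, -m, neg_ne_zero.mpr hm, ?_⟩
  rw [toWord_inv, zpow_neg, toWord_inv]
  exact (h.map _).reverse

theorem isW_of (i : Fin 3) : V.IsW (of i) := by
  obtain ⟨n, hn⟩ := V.exists_mem_toWord_w i
  exact ⟨of_ne_one i, n, 1, one_ne_zero, by rwa [toWord_of, zpow_one, List.singleton_infix_iff]⟩

theorem factorClosed_isW : FactorClosed {z | V.IsW z} :=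
  fun _ _ ⟨_, n, m, hm, h⟩ hg hgz => ⟨hg, n, m, hm, hgz.trans h⟩

theorem closure_isW : Submonoid.closure {z | V.IsW z} = ⊤ := by
  refine (Submonoid.eq_top_iff' _).mpr fun g => ?_
  induction g using FreeGroup.induction_on with
  | C1 => exact one_mem _
  | of i => exact Submonoid.subset_closure (V.isW_of i)
  | inv_of i _ => exact Submonoid.subset_closure (V.isW_of i).inv
  | mul x y hx hy => exact mul_mem hx hy

end VSeq

/-- For every factorization `w = u * v` without cancellation,
`| |u|_Y + |v|_Y - |w|_Y | ≤ 2C`. -/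
theorem stmt9 (V : VSeq) :
    ∃ C : ℝ, 1 ≤ C ∧
      ∀ u v : F, NoCancel u v →
        |(V.normY u : ℝ) + (V.normY v : ℝ) - (V.normY (u * v) : ℝ)| ≤ 2 * C := by
  refine ⟨1, le_rfl, fun u v huv => ?_⟩
  have hclosure (g : F) : g ∈ Submonoid.closure {z | V.IsW z} :=
    V.closure_isW ▸ Submonoid.mem_top g
  have hle : (V.normY (u * v) : ℝ) ≤ V.normY u + V.normY v := by
    exact_mod_cast wordLength_mul_le (hclosure u) (hclosure v)
  have hge : (V.normY u + V.normY v : ℝ) ≤ V.normY (u * v) + 1 := by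
    exact_mod_cast V.factorClosed_isW.wordLength_add_le V.closure_isW huv
  rw [abs_le]
  constructor <;> linarith

end PurelyLox
end

section
/- Let z be a nontrivial element of H. Then z is a W-word if and only if there exists n ≥ 1 such that the reduced word of z is a subword of v_n or of v_n⁻¹. -/
/-!
Elements of `H` have no letter `c^{±1}`, while `w_n` is a positive word, so for `k > 0` the
reduced word of `w_n^k` is the plain concatenation `(v_n c)^k`. A `c`-free subword of it must
therefore lie inside one block `v_n`; negative powers reduce to positive ones by inverting both
words.
-/

open FreeGroup Filter

theorem List.infix_or_infix_of_infix_append_cons {α : Type*} {x : α} {L A B : List α}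
    (hx : x ∉ L) (h : L <:+: A ++ x :: B) : L <:+: A ∨ L <:+: B := by
  have prefix_eq_nil : ∀ {l}, l ⊆ L → l <+: x :: B → l = [] := by
    intro l hl hp
    rcases List.prefix_cons_iff.mp hp with hnil | ⟨t, rfl, -⟩
    · exact hnil
    · exact absurd (hl List.mem_cons_self) hx
  rcases List.infix_append_iff.mp h with hA | hxB | ⟨l₁, l₂, rfl, h₁, h₂⟩
  · exact .inl hA
  · rcases List.infix_cons_iff.mp hxB with hp | hB
    · exact .inl (prefix_eq_nil (List.Subset.refl _) hp ▸ List.nil_infix)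
    · exact .inr hB
  · rw [prefix_eq_nil (List.subset_append_right _ _) h₂, List.append_nil]
    exact .inl h₁.isInfix

theorem List.infix_of_infix_flatten_replicate_append_singleton {α : Type*} {x : α}
    {L v : List α} (hL : L ≠ []) (hx : x ∉ L) :
    ∀ {m : ℕ}, L <:+: (List.replicate m (v ++ [x])).flatten → L <:+: v
  | 0, h => absurd (List.infix_nil.mp (by simpa using h)) hL
  | m + 1, h => by
    rw [List.replicate_succ, List.flatten_cons, List.append_assoc, List.singleton_append] at h
    exact (List.infix_or_infix_of_infix_append_cons hx h).elim id
      (List.infix_of_infix_flatten_replicate_append_singleton hL hx)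

namespace FreeGroup

variable {α : Type*}

theorem invRev_infix_invRev {L M : List (α × Bool)} (h : L <:+: M) : invRev L <:+: invRev M :=
  List.reverse_infix.mpr (h.map _)

theorem isReduced_of_forall_snd {L : List (α × Bool)} (h : ∀ x ∈ L, x.2 = true) :
    IsReduced L :=
  (List.pairwise_of_forall_mem_list (r := fun x y : α × Bool => x.1 = y.1 → x.2 = y.2)
    fun x hx y hy _ => (h x hx).trans (h y hy).symm).isChain

variable [DecidableEq α]

theorem toWord_mk_of_forall_snd {L : List (α × Bool)} (h : ∀ x ∈ L, x.2 = true) :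
    (mk L).toWord = L :=
  (isReduced_of_forall_snd h).reduce_eq

theorem toWord_infix_toWord_inv_iff {g h : FreeGroup α} :
    g.toWord <:+: h⁻¹.toWord ↔ g⁻¹.toWord <:+: h.toWord := by
  rw [toWord_inv, toWord_inv]
  refine ⟨fun hg => ?_, fun hg => ?_⟩
  · simpa only [invRev_invRev] using invRev_infix_invRev hg
  · simpa only [invRev_invRev] using invRev_infix_invRev hg

theorem fst_mem_of_mem_toWord_of_mem_closure {S : Set α} {g : FreeGroup α}
    (hg : g ∈ Subgroup.closure (of '' S)) : ∀ x ∈ g.toWord, x.1 ∈ S := by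
  induction hg using Subgroup.closure_induction with
  | mem g hg =>
    obtain ⟨s, hs, rfl⟩ := hg
    simpa using hs
  | one => simp
  | mul g h _ _ ihg ihh =>
    intro x hx
    rcases List.mem_append.mp ((toWord_mul_sublist g h).subset hx) with hx | hx
    exacts [ihg x hx, ihh x hx]
  | inv g _ ihg =>
    intro x hx
    simp only [toWord_inv, invRev, List.mem_reverse, List.mem_map] at hx
    obtain ⟨y, hy, rfl⟩ := hx
    exact ihg y hy

end FreeGroup

namespace PurelyLox

theorem c_notMem_toWord_of_mem_H {z : F} (hz : z ∈ H) : ((2 : Fin 3), true) ∉ z.toWord := by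
  rw [H, a, b, ← Set.image_pair] at hz
  intro hc
  simpa using FreeGroup.fst_mem_of_mem_toWord_of_mem_closure hz _ hc

namespace VSeq

variable (V : VSeq)

theorem toWord_w_pow (n k : ℕ) :
    ((V.w n) ^ k).toWord =
      (List.replicate k ((V.v n).toWord ++ [((2 : Fin 3), true)])).flatten := by
  rw [w, c, ← FreeGroup.mk_toWord (x := V.v n), FreeGroup.of, FreeGroup.mul_mk,
    FreeGroup.pow_mk, FreeGroup.toWord_mk_of_forall_snd, FreeGroup.mk_toWord]
  intro x hx
  obtain ⟨l, hl, hxl⟩ := List.mem_flatten.mp hx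
  rw [List.eq_of_mem_replicate hl, List.mem_append, List.mem_singleton] at hxl
  rcases hxl with hx | rfl
  exacts [(V.pos n x hx).1, rfl]

theorem toWord_infix_w_pow_iff {z : F} (hzH : z ∈ H) (hz : z ≠ 1) {n k : ℕ} (hk : k ≠ 0) :
    z.toWord <:+: ((V.w n) ^ k).toWord ↔ z.toWord <:+: (V.v n).toWord := by
  rw [toWord_w_pow]
  refine ⟨List.infix_of_infix_flatten_replicate_append_singleton
    (by simpa using hz) (c_notMem_toWord_of_mem_H hzH), fun h => h.trans ?_⟩
  obtain ⟨j, rfl⟩ := Nat.exists_eq_succ_of_ne_zero hk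
  rw [List.replicate_succ, List.flatten_cons, List.append_assoc]
  exact List.infix_append_left

theorem toWord_infix_w_zpow_iff {z : F} (hzH : z ∈ H) (hz : z ≠ 1) {n : ℕ} {m : ℤ}
    (hm : m ≠ 0) :
    z.toWord <:+: ((V.w n) ^ m).toWord ↔
      (0 < m ∧ z.toWord <:+: (V.v n).toWord) ∨
        (m < 0 ∧ z.toWord <:+: (V.v n)⁻¹.toWord) := by
  obtain ⟨k, rfl | rfl⟩ := Int.eq_nat_or_neg m
  · have hk : k ≠ 0 := by exact_mod_cast hm
    have hpos : (0 : ℤ) < k := by omega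
    rw [zpow_natCast, V.toWord_infix_w_pow_iff hzH hz hk]
    simp only [hpos, lt_asymm hpos, true_and, false_and, or_false]
  · have hk : k ≠ 0 := by simpa using hm
    rw [zpow_neg, zpow_natCast, FreeGroup.toWord_infix_toWord_inv_iff,
      FreeGroup.toWord_infix_toWord_inv_iff,
      V.toWord_infix_w_pow_iff (inv_mem hzH) (inv_ne_one.mpr hz) hk]
    have hneg : -(k : ℤ) < 0 := by omega
    simp only [hneg, lt_asymm hneg, true_and, false_and, false_or]

end VSeq

/-- A nontrivial `z ∈ H` is a `W`-word iff its reduced word is a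
subword of `v n` or of `(v n)⁻¹` for some `n`. -/
theorem stmt10 (V : VSeq) :
    ∀ z : F, z ∈ H → z ≠ 1 →
      (V.IsW z ↔ ∃ n : ℕ, z.toWord <:+: (V.v n).toWord ∨ z.toWord <:+: ((V.v n)⁻¹).toWord) := by
  intro z hzH hz
  constructor
  · rintro ⟨-, n, m, hm, hinf⟩
    rcases (V.toWord_infix_w_zpow_iff hzH hz hm).mp hinf with ⟨-, h⟩ | ⟨-, h⟩
    exacts [⟨n, .inl h⟩, ⟨n, .inr h⟩]
  · rintro ⟨n, h | h⟩
    · exact ⟨hz, n, 1, one_ne_zero,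
        (V.toWord_infix_w_zpow_iff hzH hz one_ne_zero).mpr (.inl ⟨one_pos, h⟩)⟩
    · exact ⟨hz, n, -1, by norm_num,
        (V.toWord_infix_w_zpow_iff hzH hz (by norm_num)).mpr (.inr ⟨by norm_num, h⟩)⟩

end PurelyLox
end
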